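/- Let $\mathsf{M}$ be a $d\times d$ integer dilation matrix and $a$ a finitely supported $\mathsf{M}$-interpolatory filter with $\widehat a(0)=1$. For a nonzero coset representative $\gamma\in\Gamma_{\mathsf{M}}$, define $\widehat{h}(\xi):= d_{\mathsf{M}}^{-1} - d_{\mathsf{M}}|\widehat{a^{[\gamma,\mathsf{M}]}}(\xi)|^2$. If $a$ has sum rules of order $2m$ with respect to $\mathsf{M}$, then $\widehat{h}(\xi) = O(\|\xi\|^{2m})$ as $\xi\to 0$, and $\widehat{h}(\xi)$ is real-valued for all $\xi\in\mathbb{R}^d$. -/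

import Mathlib

open scoped BigOperators Classical
open Asymptotics Filter Matrix

noncomputable section

/-- Real cast of an integer vector. -/
def zr {d : ℕ} (k : Fin d → ℤ) : Fin d → ℝ := fun i => (k i : ℝ)

/-- Fourier series `û(ξ) = ∑_k u(k) e^{-i k·ξ}` of a filter on `ℤ^d`. -/
def fhat {d : ℕ} (a : (Fin d → ℤ) → ℂ) (ξ : Fin d → ℝ) : ℂ :=
  ∑' k : Fin d → ℤ, a k * Complex.exp (-Complex.I * ((∑ i, (k i : ℝ) * ξ i : ℝ) : ℂ))

/-- `d_M = |det M|`. -/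
def dm {d : ℕ} (M : Matrix (Fin d) (Fin d) ℤ) : ℕ := M.det.natAbs

/-- A dilation matrix: integer matrix whose (complex) eigenvalues all exceed 1 in modulus. -/
def IsDilation {d : ℕ} (M : Matrix (Fin d) (Fin d) ℤ) : Prop :=
  M.det ≠ 0 ∧ ∀ z : ℂ, (M.map (Int.cast : ℤ → ℂ)).charpoly.IsRoot z → 1 < ‖z‖

/-- The real matrix associated with an integer matrix. -/
def Mr {d : ℕ} (M : Matrix (Fin d) (Fin d) ℤ) : Matrix (Fin d) (Fin d) ℝ :=
  M.map (Int.cast : ℤ → ℝ)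

/-- `M`-interpolatory filter: `a(Mk) = d_M⁻¹ δ(k)`. -/
def Interp {d : ℕ} (M : Matrix (Fin d) (Fin d) ℤ) (a : (Fin d → ℤ) → ℂ) : Prop :=
  ∀ k : Fin d → ℤ, a (M.mulVec k) = ((dm M : ℂ))⁻¹ * (if k = 0 then 1 else 0)

/-- Coset filter `u^{[γ,M]}(k) = u(γ + Mk)`. -/
def coset {d : ℕ} (M : Matrix (Fin d) (Fin d) ℤ) (γ : Fin d → ℤ)
    (a : (Fin d → ℤ) → ℂ) : (Fin d → ℤ) → ℂ := fun k => a (γ + M.mulVec k)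

/-- `a` has order-`m` sum rules w.r.t. `M` (with `Ω` the set `Ω_M`):
`â(ξ+2πω) = O(‖ξ‖^m)` as `ξ → 0` for every nonzero `ω ∈ Ω_M`. -/
def SumRules {d : ℕ} (M : Matrix (Fin d) (Fin d) ℤ) (Ω : Finset (Fin d → ℝ))
    (a : (Fin d → ℤ) → ℂ) (m : ℕ) : Prop :=
  ∀ ω ∈ Ω, ω ≠ 0 →
    (fun ξ : Fin d → ℝ => fhat a (ξ + (2 * Real.pi) • ω)) =O[nhds (0 : Fin d → ℝ)]
      fun ξ => ‖ξ‖ ^ m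

/-- `Ω` is the set `Ω_M = [M^{-T}ℤ^d] ∩ [0,1)^d`. -/
def OmegaSpec {d : ℕ} (M : Matrix (Fin d) (Fin d) ℤ) (Ω : Finset (Fin d → ℝ)) : Prop :=
  ∀ x : Fin d → ℝ, x ∈ Ω ↔
    ((∃ k : Fin d → ℤ, (Mr M)ᵀ.mulVec x = zr k) ∧ ∀ i, 0 ≤ x i ∧ x i < 1)

/-!
Summing `e^{2πiγ·ω} â(ξ + 2πω)` over `ω ∈ Ω_M` and using the character sum
`∑_{ω ∈ Ω_M} e^{2πik·ω} = |Ω_M| [k ∈ Mℤ^d]` leaves `|Ω_M| e^{-iγ·ξ} â^{[γ,M]}(Mᵀξ)`.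
For `γ = 0` the interpolatory property makes the coset symbol the constant `d_M⁻¹`. Subtracting
the two identities, only the terms `ω ≠ 0` survive, so the sum rules give
`e^{-iγ·ξ} â^{[γ,M]}(Mᵀξ) = d_M⁻¹ + ρ(ξ)` with `ρ(ξ) = O(‖ξ‖^{2m})`, and then
`ĥ(Mᵀξ) = -(ρ + ρ̄ + d_M |ρ|²)(ξ) = O(‖ξ‖^{2m})`. The invertible linear substitution `ξ ↦ Mᵀξ`
does not change the order of vanishing.
-/

open scoped Real FourierTransform ComplexConjugate

theorem Real.fourierChar_eq_one_iff {x : ℝ} : 𝐞 x = 1 ↔ ∃ n : ℤ, x = n := by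
  rw [Real.fourierChar_apply', Circle.exp_eq_one]
  refine exists_congr fun n => ?_
  constructor <;> intro h
  · nlinarith [Real.pi_pos]
  · rw [h]; ring

theorem Circle.conj_mul_self_mul (u : Circle) (z : ℂ) :
    conj ((u : ℂ) * z) * ((u : ℂ) * z) = conj z * z := by
  rw [map_mul, mul_mul_mul_comm, ← Complex.normSq_eq_conj_mul_self, Circle.normSq_coe,
    Complex.ofReal_one, one_mul]

theorem natCast_inv_sub_mul_conj_mul_self_inv_add {n : ℕ} (hn : n ≠ 0) (ρ : ℂ) :
    (n : ℂ)⁻¹ - n * (conj ((n : ℂ)⁻¹ + ρ) * ((n : ℂ)⁻¹ + ρ)) =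
      -(ρ + conj ρ + n * (conj ρ * ρ)) := by
  rw [map_add, map_inv₀, map_natCast]
  field_simp
  ring

theorem im_natCast_inv_sub_mul_conj_mul_self (n : ℕ) (z : ℂ) :
    ((n : ℂ)⁻¹ - n * (conj z * z)).im = 0 := by
  rw [← Complex.normSq_eq_conj_mul_self]
  simp

theorem Asymptotics.IsBigO.comp_continuousLinearMap_norm_pow {𝕜 E F G : Type*}
    [NontriviallyNormedField 𝕜] [NormedAddCommGroup E] [NormedSpace 𝕜 E]
    [NormedAddCommGroup F] [NormedSpace 𝕜 F] [Norm G] {f : F → G} {n : ℕ}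
    (hf : f =O[nhds 0] fun y => ‖y‖ ^ n) (L : E →L[𝕜] F) :
    (fun x => f (L x)) =O[nhds 0] fun x => ‖x‖ ^ n := by
  have hL : Tendsto L (nhds 0) (nhds 0) := by
    simpa using L.continuous.tendsto 0
  exact (hf.comp_tendsto hL).trans ((L.isBigO_id _).norm_norm.pow n)

theorem Finset.sum_eq_zero_of_mapsTo_of_map_eq_mul {ι R : Type*} [Ring R] [NoZeroDivisors R]
    {s : Finset ι} {f : ι → R} (T : ι → ι) (hT : Set.MapsTo T s s) (hinj : Set.InjOn T s)
    {c : R} (hc : c ≠ 1) (hf : ∀ x ∈ s, f (T x) = c * f x) : ∑ x ∈ s, f x = 0 := by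
  have hperm : ∑ x ∈ s, f (T x) = ∑ x ∈ s, f x :=
    Finset.sum_nbij T hT hinj (Finset.surjOn_of_injOn_of_card_le T hT hinj le_rfl) fun _ _ => rfl
  have : (1 - c) * ∑ x ∈ s, f x = 0 := by
    rw [sub_mul, one_mul, Finset.mul_sum, ← Finset.sum_congr rfl hf, hperm, sub_self]
  exact (mul_eq_zero.1 this).resolve_left (sub_ne_zero.2 hc.symm)

theorem eq_of_fract_add_eq {x y a : ℝ} (hx : Int.fract x = x) (hy : Int.fract y = y)
    (h : Int.fract (x + a) = Int.fract (y + a)) : x = y := by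
  rw [← hx, ← hy, Int.fract_eq_fract]
  obtain ⟨z, hz⟩ := Int.fract_eq_fract.1 h
  exact ⟨z, by linarith⟩

section Lattice

variable {d : ℕ}

@[simp] theorem zr_apply (k : Fin d → ℤ) (i : Fin d) : zr k i = k i := rfl

@[simp] theorem zr_zero : zr (0 : Fin d → ℤ) = 0 := by
  ext; simp

@[simp] theorem zr_add (k l : Fin d → ℤ) : zr (k + l) = zr k + zr l := by
  ext; simp

@[simp] theorem zr_sub (k l : Fin d → ℤ) : zr (k - l) = zr k - zr l := by
  ext; simp

theorem zr_injective : Function.Injective (zr (d := d)) :=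
  fun _ _ h => funext fun i => by simpa using congrFun h i

theorem zr_dotProduct_zr (k l : Fin d → ℤ) : zr k ⬝ᵥ zr l = ((k ⬝ᵥ l : ℤ) : ℝ) := by
  simp [dotProduct]

theorem zr_mulVec (M : Matrix (Fin d) (Fin d) ℤ) (k : Fin d → ℤ) :
    zr (M *ᵥ k) = Mr M *ᵥ zr k := by
  ext i; exact RingHom.map_mulVec (Int.castRingHom ℝ) M k i

theorem Mr_transpose (M : Matrix (Fin d) (Fin d) ℤ) : Mr Mᵀ = (Mr M)ᵀ :=
  Matrix.transpose_map

theorem det_Mr (M : Matrix (Fin d) (Fin d) ℤ) : (Mr M).det = M.det :=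
  ((Int.castRingHom ℝ).map_det M).symm

theorem isUnit_det_transpose_Mr {M : Matrix (Fin d) (Fin d) ℤ} (hdet : M.det ≠ 0) :
    IsUnit (Mr M)ᵀ.det := by
  rw [det_transpose, det_Mr, isUnit_iff_ne_zero]
  exact_mod_cast hdet

theorem zr_mulVec_dotProduct (M : Matrix (Fin d) (Fin d) ℤ) (k : Fin d → ℤ) (x : Fin d → ℝ) :
    zr (M *ᵥ k) ⬝ᵥ x = zr k ⬝ᵥ (Mr M)ᵀ *ᵥ x := by
  rw [dotProduct_mulVec, vecMul_transpose, zr_mulVec]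

theorem fract_add_eq_sub_zr_floor (x ω : Fin d → ℝ) :
    (fun i => Int.fract (x i + ω i)) = x + ω - zr fun i => ⌊x i + ω i⌋ := by
  ext i; simp only [Pi.sub_apply, Pi.add_apply, zr_apply, Int.fract]

end Lattice

section Omega

variable {d : ℕ} {M : Matrix (Fin d) (Fin d) ℤ} {Ω : Finset (Fin d → ℝ)}

theorem OmegaSpec.zero_mem (hΩ : OmegaSpec M Ω) : (0 : Fin d → ℝ) ∈ Ω :=
  (hΩ 0).2 ⟨⟨0, by ext; simp⟩, fun _ => by simp⟩

theorem OmegaSpec.fourierChar_mulVec_dotProduct_eq_one (hΩ : OmegaSpec M Ω) {ω : Fin d → ℝ}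
    (hω : ω ∈ Ω) (n : Fin d → ℤ) : 𝐞 (zr (M *ᵥ n) ⬝ᵥ ω) = 1 := by
  obtain ⟨⟨k, hk⟩, -⟩ := (hΩ ω).1 hω
  rw [zr_mulVec_dotProduct, hk, zr_dotProduct_zr]
  exact Real.fourierChar_eq_one_iff.2 ⟨_, rfl⟩

theorem OmegaSpec.fract_add_mem (hΩ : OmegaSpec M Ω) {ω ω₀ : Fin d → ℝ} (hω : ω ∈ Ω)
    (hω₀ : ∃ k, (Mr M)ᵀ *ᵥ ω₀ = zr k) : (fun i => Int.fract (ω i + ω₀ i)) ∈ Ω := by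
  obtain ⟨⟨k, hk⟩, -⟩ := (hΩ ω).1 hω
  obtain ⟨k₀, hk₀⟩ := hω₀
  refine (hΩ _).2 ⟨⟨k + k₀ - Mᵀ *ᵥ fun i => ⌊ω i + ω₀ i⌋, ?_⟩,
    fun i => ⟨Int.fract_nonneg _, Int.fract_lt_one _⟩⟩
  rw [fract_add_eq_sub_zr_floor, mulVec_sub, mulVec_add, hk, hk₀, zr_sub, zr_add, zr_mulVec,
    Mr_transpose]

theorem OmegaSpec.injOn_fract_add (hΩ : OmegaSpec M Ω) (ω₀ : Fin d → ℝ) :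
    Set.InjOn (fun (ω : Fin d → ℝ) i => Int.fract (ω i + ω₀ i)) Ω := by
  have hfract : ∀ ω ∈ Ω, ∀ i, Int.fract (ω i) = ω i := fun ω hω i =>
    Int.fract_eq_self.2 (((hΩ ω).1 hω).2 i)
  intro ω hω ω' hω' h
  ext i
  exact eq_of_fract_add_eq (hfract ω hω i) (hfract ω' hω' i) (congrFun h i)

theorem exists_dual_dotProduct_not_int (hdet : M.det ≠ 0) {k : Fin d → ℤ}
    (hk : ¬ ∃ n, k = M *ᵥ n) :
    ∃ ω₀ : Fin d → ℝ, (∃ p, (Mr M)ᵀ *ᵥ ω₀ = zr p) ∧ ¬ ∃ z : ℤ, zr k ⬝ᵥ ω₀ = z := by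
  have hunit := isUnit_det_transpose_Mr hdet
  set B := (Mr M)ᵀ⁻¹
  by_contra! h
  choose p hp using fun j => h (B *ᵥ Pi.single j 1) ⟨Pi.single j 1, by
    rw [mulVec_mulVec, mul_nonsing_inv _ hunit, one_mulVec]
    ext i
    simp [Pi.single_apply]⟩
  refine hk ⟨p, zr_injective ?_⟩
  have hkB : zr k ᵥ* B = zr p := by
    ext j; rw [zr_apply, ← hp j, dotProduct_mulVec, dotProduct_single_one]
  rw [zr_mulVec, ← vecMul_transpose, ← hkB, vecMul_vecMul, nonsing_inv_mul _ hunit, vecMul_one]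

end Omega

section Fourier

variable {d : ℕ} {M : Matrix (Fin d) (Fin d) ℤ} {Ω : Finset (Fin d → ℝ)} {a : (Fin d → ℤ) → ℂ}

/-- For `k ∉ Mℤ^d`, translating by a dual vector `ω₀` with `k·ω₀ ∉ ℤ` and reducing mod `ℤ^d`
permutes `Ω` and multiplies every term by `𝐞 (k·ω₀) ≠ 1`. -/
theorem OmegaSpec.sum_fourierChar_dotProduct (hΩ : OmegaSpec M Ω) (hdet : M.det ≠ 0)
    (k : Fin d → ℤ) :
    ∑ ω ∈ Ω, (𝐞 (zr k ⬝ᵥ ω) : ℂ) = if ∃ n, k = M *ᵥ n then (Ω.card : ℂ) else 0 := by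
  split_ifs with hk
  · obtain ⟨n, rfl⟩ := hk
    simp [Finset.sum_congr rfl fun ω hω =>
      congrArg ((↑) : Circle → ℂ) (hΩ.fourierChar_mulVec_dotProduct_eq_one hω n)]
  obtain ⟨ω₀, hω₀, hk₀⟩ := exists_dual_dotProduct_not_int hdet hk
  refine Finset.sum_eq_zero_of_mapsTo_of_map_eq_mul (fun ω i => Int.fract (ω i + ω₀ i))
    (fun ω hω => hΩ.fract_add_mem hω hω₀) (hΩ.injOn_fract_add ω₀) (c := 𝐞 (zr k ⬝ᵥ ω₀)) ?_ ?_
  · rw [Ne, Circle.coe_eq_one, Real.fourierChar_eq_one_iff]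
    exact hk₀
  · intro ω _
    rw [fract_add_eq_sub_zr_floor, dotProduct_sub, zr_dotProduct_zr, dotProduct_add,
      AddChar.map_sub_eq_div, Real.fourierChar_eq_one_iff.2 ⟨_, rfl⟩, div_one,
      AddChar.map_add_eq_mul, Circle.coe_mul, mul_comm]

theorem fhat_eq_tsum_fourierChar (ξ : Fin d → ℝ) :
    fhat a ξ = ∑' k, a k * 𝐞 (-(zr k ⬝ᵥ ξ) / (2 * π)) := by
  refine tsum_congr fun k => congrArg (a k * ·) ?_
  rw [Real.fourierChar_apply]
  congr 1
  simp only [dotProduct, zr_apply]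
  push_cast
  field_simp

theorem fourierChar_mul_fourierChar_add_smul (γ n : Fin d → ℤ) (ξ ω : Fin d → ℝ) :
    (𝐞 (zr γ ⬝ᵥ ω) : ℂ) * 𝐞 (-(zr n ⬝ᵥ (ξ + (2 * π) • ω)) / (2 * π)) =
      𝐞 (-(zr n ⬝ᵥ ξ) / (2 * π)) * 𝐞 (zr (γ - n) ⬝ᵥ ω) := by
  rw [← Circle.coe_mul, ← Circle.coe_mul, ← AddChar.map_add_eq_mul, ← AddChar.map_add_eq_mul]
  refine congrArg (fun t => ((𝐞 t : Circle) : ℂ)) ?_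
  rw [dotProduct_add, dotProduct_smul, zr_sub, sub_dotProduct, smul_eq_mul]
  field_simp
  ring

theorem fourierChar_mulVec_add_dotProduct (γ p : Fin d → ℤ) (ξ : Fin d → ℝ) :
    (𝐞 (-(zr (γ + M *ᵥ p) ⬝ᵥ ξ) / (2 * π)) : ℂ) =
      𝐞 (-(zr γ ⬝ᵥ ξ) / (2 * π)) * 𝐞 (-(zr p ⬝ᵥ (Mr M)ᵀ *ᵥ ξ) / (2 * π)) := by
  rw [← Circle.coe_mul, ← AddChar.map_add_eq_mul, zr_add, add_dotProduct, zr_mulVec_dotProduct]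
  refine congrArg (fun t => ((𝐞 t : Circle) : ℂ)) ?_
  ring

theorem OmegaSpec.sum_fourierChar_mul_fhat_add (hΩ : OmegaSpec M Ω) (hdet : M.det ≠ 0)
    (ha : (Function.support a).Finite) (γ : Fin d → ℤ) (ξ : Fin d → ℝ) :
    ∑ ω ∈ Ω, 𝐞 (zr γ ⬝ᵥ ω) * fhat a (ξ + (2 * π) • ω) =
      Ω.card * 𝐞 (-(zr γ ⬝ᵥ ξ) / (2 * π)) * fhat (coset M γ a) ((Mr M)ᵀ *ᵥ ξ) := by
  set E : (Fin d → ℤ) → ℂ := fun n => 𝐞 (-(zr n ⬝ᵥ ξ) / (2 * π))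
  set f : (Fin d → ℤ) → ℂ := fun n =>
    a n * E n * if ∃ p, γ - n = M *ᵥ p then (Ω.card : ℂ) else 0
  have hf : Function.support f ⊆ Set.range fun p => γ + M *ᵥ p := by
    intro n hn
    obtain ⟨p, hp⟩ : ∃ p, γ - n = M *ᵥ p := by by_contra h; simp [f, h] at hn
    exact ⟨-p, show γ + M *ᵥ -p = n by rw [mulVec_neg, ← hp]; abel⟩
  calc ∑ ω ∈ Ω, 𝐞 (zr γ ⬝ᵥ ω) * fhat a (ξ + (2 * π) • ω)
      = ∑ ω ∈ Ω, ∑' n, a n * E n * 𝐞 (zr (γ - n) ⬝ᵥ ω) := by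
        refine Finset.sum_congr rfl fun ω _ => ?_
        rw [fhat_eq_tsum_fourierChar, ← tsum_mul_left]
        refine tsum_congr fun n => ?_
        rw [mul_left_comm, fourierChar_mul_fourierChar_add_smul, mul_assoc]
    _ = ∑' n, f n := by
        rw [← Summable.tsum_finsetSum fun ω _ => summable_of_hasFiniteSupport <|
          ha.subset <| Function.support_mul_subset_left _ _ |>.trans <|
            Function.support_mul_subset_left _ _]
        refine tsum_congr fun n => ?_
        rw [← Finset.mul_sum, hΩ.sum_fourierChar_dotProduct hdet]
    _ = ∑' p, f (γ + M *ᵥ p) :=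
        ((add_right_injective γ).comp (mulVec_injective_of_det_ne_zero hdet) |>.tsum_eq hf).symm
    _ = ∑' p, Ω.card * E γ * (coset M γ a p * 𝐞 (-(zr p ⬝ᵥ (Mr M)ᵀ *ᵥ ξ) / (2 * π))) := by
        refine tsum_congr fun p => ?_
        simp only [f, E, if_pos (⟨-p, by rw [mulVec_neg]; abel⟩ : ∃ q, γ - (γ + M *ᵥ p) = M *ᵥ q),
          fourierChar_mulVec_add_dotProduct, coset]
        ring
    _ = _ := by rw [tsum_mul_left, ← fhat_eq_tsum_fourierChar]

theorem fhat_coset_zero (hint : Interp M a) (η : Fin d → ℝ) :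
    fhat (coset M 0 a) η = (dm M : ℂ)⁻¹ := by
  rw [fhat, tsum_eq_single 0 fun k hk => by simp [coset, hint k, hk]]
  simpa [coset] using hint 0

theorem OmegaSpec.card_mul_fourierChar_mul_fhat_coset_sub (hΩ : OmegaSpec M Ω)
    (hdet : M.det ≠ 0) (ha : (Function.support a).Finite)
    (hint : Interp M a) (γ : Fin d → ℤ) (ξ : Fin d → ℝ) :
    Ω.card * ((𝐞 (-(zr γ ⬝ᵥ ξ) / (2 * π)) : ℂ) * fhat (coset M γ a) ((Mr M)ᵀ *ᵥ ξ) -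
      (dm M : ℂ)⁻¹) = ∑ ω ∈ Ω, (𝐞 (zr γ ⬝ᵥ ω) - 1) * fhat a (ξ + (2 * π) • ω) := by
  have h0 := hΩ.sum_fourierChar_mul_fhat_add hdet ha 0 ξ
  simp only [zr_zero, zero_dotProduct, neg_zero, zero_div, AddChar.map_zero_eq_one,
    Circle.coe_one, one_mul, mul_one, fhat_coset_zero hint] at h0
  simp_rw [sub_mul, one_mul, Finset.sum_sub_distrib, hΩ.sum_fourierChar_mul_fhat_add hdet ha γ,
    h0]
  ring

theorem OmegaSpec.isBigO_inv_sub_mul_conj_mul_self_fhat_coset (hΩ : OmegaSpec M Ω)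
    (hdet : M.det ≠ 0) (ha : (Function.support a).Finite)
    (hint : Interp M a) {n : ℕ} (hsr : SumRules M Ω a n) (γ : Fin d → ℤ) :
    (fun ξ => (dm M : ℂ)⁻¹ - dm M * (conj (fhat (coset M γ a) ((Mr M)ᵀ *ᵥ ξ)) *
      fhat (coset M γ a) ((Mr M)ᵀ *ᵥ ξ))) =O[nhds 0] fun ξ => ‖ξ‖ ^ n := by
  set u : (Fin d → ℝ) → Circle := fun ξ => 𝐞 (-(zr γ ⬝ᵥ ξ) / (2 * π))
  set ρ := fun ξ => u ξ * fhat (coset M γ a) ((Mr M)ᵀ *ᵥ ξ) - (dm M : ℂ)⁻¹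
  have hcard : (Ω.card : ℂ) ≠ 0 := Nat.cast_ne_zero.2 (Finset.card_ne_zero_of_mem hΩ.zero_mem)
  have hρ : ρ =O[nhds 0] fun ξ => ‖ξ‖ ^ n := by
    have hsum : (fun ξ => ∑ ω ∈ Ω, ((𝐞 (zr γ ⬝ᵥ ω) : ℂ) - 1) * fhat a (ξ + (2 * π) • ω))
        =O[nhds 0] fun ξ => ‖ξ‖ ^ n := by
      refine IsBigO.fun_sum fun ω hω => ?_
      rcases eq_or_ne ω 0 with rfl | hω0
      · simpa using isBigO_zero _ _
      · exact (hsr ω hω hω0).const_mul_left _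
    refine (hsum.const_mul_left (Ω.card : ℂ)⁻¹).congr_left fun ξ => ?_
    rw [← hΩ.card_mul_fourierChar_mul_fhat_coset_sub hdet ha hint, inv_mul_cancel_left₀ hcard]
  have hρconj : (fun ξ => conj (ρ ξ)) =O[nhds 0] fun ξ => ‖ξ‖ ^ n :=
    IsBigO.of_norm_left (by simpa only [RCLike.norm_conj] using hρ.norm_left)
  have hρ_one : ρ =O[nhds 0] fun _ => (1 : ℝ) :=
    hρ.trans <| Filter.Tendsto.isBigO_one ℝ (c := ‖(0 : Fin d → ℝ)‖ ^ n) <|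
      (continuous_norm.pow n).tendsto 0
  have hdm : dm M ≠ 0 := Int.natAbs_ne_zero.2 hdet
  have hρρ : (fun ξ => (dm M : ℂ) * (conj (ρ ξ) * ρ ξ)) =O[nhds 0] fun ξ => ‖ξ‖ ^ n := by
    simpa only [mul_one] using (hρconj.mul hρ_one).const_mul_left (dm M : ℂ)
  refine ((hρ.add hρconj).add hρρ).neg_left.congr_left fun ξ => ?_
  rw [← natCast_inv_sub_mul_conj_mul_self_inv_add hdm, add_sub_cancel, Circle.conj_mul_self_mul]

end Fourier

theorem stmt15_general {d : ℕ} (M : Matrix (Fin d) (Fin d) ℤ) (hM : IsDilation M)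
    (Ω : Finset (Fin d → ℝ)) (hΩ : OmegaSpec M Ω)
    (a : (Fin d → ℤ) → ℂ) (ha : (Function.support a).Finite)
    (hint : Interp M a)
    (m : ℕ) (hsr : SumRules M Ω a (2 * m))
    (γ : Fin d → ℤ) :
    ((fun ξ : Fin d → ℝ =>
        ((dm M : ℂ))⁻¹ - (dm M : ℂ) *
          ((starRingEnd ℂ) (fhat (coset M γ a) ξ) * fhat (coset M γ a) ξ))
      =O[nhds (0 : Fin d → ℝ)] fun ξ => ‖ξ‖ ^ (2 * m)) ∧
    (∀ ξ : Fin d → ℝ,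
      (((dm M : ℂ))⁻¹ - (dm M : ℂ) *
        ((starRingEnd ℂ) (fhat (coset M γ a) ξ) * fhat (coset M γ a) ξ)).im = 0) := by
  refine ⟨?_, fun ξ => im_natCast_inv_sub_mul_conj_mul_self _ _⟩
  obtain ⟨hdet, -⟩ := hM
  have hξ := hΩ.isBigO_inv_sub_mul_conj_mul_self_fhat_coset hdet ha hint hsr γ
  refine (hξ.comp_continuousLinearMap_norm_pow
    (mulVecLin (Mr M)ᵀ⁻¹).toContinuousLinearMap).congr_left fun η => ?_
  simp [mulVec_mulVec, mul_nonsing_inv _ (isUnit_det_transpose_Mr hdet)]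

/-- for an interpolatory filter with `2m` sum rules and a nonzero coset
representative `γ`, `ĥ(ξ) := d⁻¹ - d |â^{[γ,M]}(ξ)|²` is real-valued and
`O(‖ξ‖^{2m})` as `ξ → 0`. -/
theorem stmt15 {d : ℕ} (M : Matrix (Fin d) (Fin d) ℤ) (hM : IsDilation M)
    (Ω : Finset (Fin d → ℝ)) (hΩ : OmegaSpec M Ω)
    (a : (Fin d → ℤ) → ℂ) (ha : (Function.support a).Finite)
    (hint : Interp M a) (ha0 : fhat a 0 = 1)
    (m : ℕ) (hsr : SumRules M Ω a (2 * m))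
    (γ : Fin d → ℤ) (hγ : ¬ ∃ n : Fin d → ℤ, γ = M.mulVec n) :
    ((fun ξ : Fin d → ℝ =>
        ((dm M : ℂ))⁻¹ - (dm M : ℂ) *
          ((starRingEnd ℂ) (fhat (coset M γ a) ξ) * fhat (coset M γ a) ξ))
      =O[nhds (0 : Fin d → ℝ)] fun ξ => ‖ξ‖ ^ (2 * m)) ∧
    (∀ ξ : Fin d → ℝ,
      (((dm M : ℂ))⁻¹ - (dm M : ℂ) *
        ((starRingEnd ℂ) (fhat (coset M γ a) ξ) * fhat (coset M γ a) ξ)).im = 0) :=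
  stmt15_general M hM Ω hΩ a ha hint m hsr γ
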